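/- arXiv:1401.2608 — 6 statements merged into one kernel-verified Lean document; each statement's English description precedes it below -/
import Mathlib

section
/- Let X be a type, i : X, and x, y : Finset X. Then x ∪ {i} = y ∪ {i} if and only if (x = y ∪ {i}) ∨ (y = x ∪ {i}) ∨ (x = y). -/
namespace Finset

theorem insert_eq_insert_iff {α : Type*} [DecidableEq α] {a : α} {s t : Finset α} :
    insert a s = insert a t ↔ s = insert a t ∨ t = insert a s ∨ s = t := by
  refine ⟨fun h => ?_, ?_⟩
  · by_cases hs : a ∈ s
    · left
      rw [← h, insert_eq_of_mem hs]
    by_cases ht : a ∈ t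
    · right; left
      rw [h, insert_eq_of_mem ht]
    · right; right
      rw [← erase_insert hs, h, erase_insert ht]
  · rintro (rfl | rfl | rfl) <;> simp

end Finset

theorem stmt_0 {X : Type*} [DecidableEq X] (i : X) (x y : Finset X) :
    x ∪ {i} = y ∪ {i} ↔ (x = y ∪ {i} ∨ y = x ∪ {i} ∨ x = y) := by
  simp only [Finset.union_comm _ {i}, ← Finset.insert_eq]
  exact Finset.insert_eq_insert_iff
end

section
/- Let X be a type and a, x, y : Finset X. Then x ∪ a = y ∪ a if and only if there exist a', a'' : Finset X with a' ⊆ a, a'' ⊆ a, Disjoint a' a'', and x ∪ a' = y ∪ a''. -/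
section SupCancel

variable {α : Type*}

theorem sup_eq_sup_of_sup_eq_sup_of_le [SemilatticeSup α] {a a' a'' x y : α}
    (ha' : a' ≤ a) (ha'' : a'' ≤ a) (h : x ⊔ a' = y ⊔ a'') : x ⊔ a = y ⊔ a := by
  rw [← sup_eq_right.mpr ha', ← sup_assoc, h, sup_assoc, sup_eq_right.mpr ha'',
    sup_eq_right.mpr ha']

theorem sdiff_le_of_sup_eq_sup [GeneralizedBooleanAlgebra α] {a x y : α}
    (h : x ⊔ a = y ⊔ a) : y \ x ≤ a :=
  sdiff_le_iff.mpr (h ▸ le_sup_left)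

theorem sup_eq_sup_iff_exists_disjoint [GeneralizedBooleanAlgebra α] {a x y : α} :
    x ⊔ a = y ⊔ a ↔ ∃ a' a'', a' ≤ a ∧ a'' ≤ a ∧ Disjoint a' a'' ∧ x ⊔ a' = y ⊔ a'' := by
  constructor
  · intro h
    refine ⟨y \ x, x \ y, sdiff_le_of_sup_eq_sup h, sdiff_le_of_sup_eq_sup h.symm,
      disjoint_sdiff_sdiff, ?_⟩
    rw [sup_sdiff_self_right, sup_sdiff_self_right, sup_comm]
  · rintro ⟨a', a'', ha', ha'', -, h⟩
    exact sup_eq_sup_of_sup_eq_sup_of_le ha' ha'' h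

end SupCancel

theorem stmt_1 {X : Type*} [DecidableEq X] (a x y : Finset X) :
    x ∪ a = y ∪ a ↔
      ∃ a' a'' : Finset X, a' ⊆ a ∧ a'' ⊆ a ∧ Disjoint a' a'' ∧ x ∪ a' = y ∪ a'' :=
  sup_eq_sup_iff_exists_disjoint
end

section
/- Let X be a type and c, d, x : Finset X with Disjoint c d. Then x ∪ c = x ∪ d if and only if c ∪ d ⊆ x. -/
theorem sup_eq_sup_iff_sup_le_of_disjoint {α : Type*} [DistribLattice α] [OrderBot α]
    {c d x : α} (hcd : Disjoint c d) : x ⊔ c = x ⊔ d ↔ c ⊔ d ≤ x := by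
  constructor
  · intro h
    have hc : c ≤ x ⊔ d := h ▸ le_sup_right
    have hd : d ≤ x ⊔ c := h ▸ le_sup_right
    exact sup_le (hcd.left_le_of_le_sup_right hc) (hcd.symm.left_le_of_le_sup_right hd)
  · intro h
    rw [sup_eq_left.2 (le_sup_left.trans h), sup_eq_left.2 (le_sup_right.trans h)]

theorem stmt_4 {X : Type*} [DecidableEq X] (c d x : Finset X) (hcd : Disjoint c d) :
    x ∪ c = x ∪ d ↔ c ∪ d ⊆ x :=
  sup_eq_sup_iff_sup_le_of_disjoint hcd
end

section
/- Let X be a type, c, d : Finset X with Disjoint c d, ι a nonempty type, and e : ι → Finset X. Then there exists a finite subset s : Finset ι such that for all x, y : Finset X, if x ∪ e i ∪ c = y ∪ e i ∪ d holds for all i ∈ s, then x ∪ e i ∪ c = y ∪ e i ∪ d holds for all i : ι. -/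
/-! Membership of a point `a` in `x ∪ e i ∪ c` is forced when `a ∈ e i`, so the `i`-th equation
only constrains the points outside `e i`. Fix `i₀`; each point of the finite set `e i₀` lying outside
some `e i` needs one such index as a witness, and `i₀` itself witnesses every point outside `e i₀`.
These finitely many indices already imply all the equations. -/

namespace Finset

variable {X ι : Type*}

theorem exists_finset_forall_mem_of_forall_mem [Nonempty ι] (e : ι → Finset X) :
    ∃ s : Finset ι, ∀ a, (∀ i ∈ s, a ∈ e i) → ∀ i, a ∈ e i := by
  classical
  obtain ⟨i₀⟩ := ‹Nonempty ι›
  -- Drinker paradox: `a ∈ e j` forces `a` into every `e i` for a suitable `j`.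
  have witness (a : X) : ∃ j, a ∈ e j → ∀ i, a ∈ e i := by
    by_cases h : ∀ i, a ∈ e i
    · exact ⟨i₀, fun _ => h⟩
    · obtain ⟨j, hj⟩ := not_forall.1 h
      exact ⟨j, fun h' => absurd h' hj⟩
  choose f hf using witness
  refine ⟨insert i₀ ((e i₀).image f), fun a ha => hf a (ha _ ?_)⟩
  exact mem_insert_of_mem (mem_image_of_mem f (ha i₀ (mem_insert_self _ _)))

variable [DecidableEq X]

theorem union_union_eq_union_union_iff (x y e c d : Finset X) :
    x ∪ e ∪ c = y ∪ e ∪ d ↔ ∀ a ∉ e, (a ∈ x ∨ a ∈ c ↔ a ∈ y ∨ a ∈ d) := by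
  simp only [Finset.ext_iff, mem_union]
  refine forall_congr' fun a => ⟨fun h _ => by tauto, fun h => ?_⟩
  by_cases ha : a ∈ e <;> simp_all

end Finset

open Finset in
theorem stmt_8_general {X : Type*} [DecidableEq X] (c d : Finset X)
    {ι : Type*} [Nonempty ι] (e : ι → Finset X) :
    ∃ s : Finset ι, ∀ x y : Finset X,
      (∀ i ∈ s, x ∪ e i ∪ c = y ∪ e i ∪ d) → ∀ i : ι, x ∪ e i ∪ c = y ∪ e i ∪ d := by
  obtain ⟨s, hs⟩ := exists_finset_forall_mem_of_forall_mem e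
  refine ⟨s, fun x y h j => (union_union_eq_union_union_iff _ _ _ _ _).2 fun a haj => ?_⟩
  obtain ⟨i, hi, hai⟩ : ∃ i ∈ s, a ∉ e i := by
    by_contra! h'
    exact haj (hs a h' j)
  exact (union_union_eq_union_union_iff _ _ _ _ _).1 (h i hi) a hai

theorem stmt_8 {X : Type*} [DecidableEq X] (c d : Finset X) (hcd : Disjoint c d)
    {ι : Type*} [Nonempty ι] (e : ι → Finset X) :
    ∃ s : Finset ι, ∀ x y : Finset X,
      (∀ i ∈ s, x ∪ e i ∪ c = y ∪ e i ∪ d) → ∀ i : ι, x ∪ e i ∪ c = y ∪ e i ∪ d :=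
  stmt_8_general c d e
end

section
/- Let I be an infinite type, n : ℕ, and let S be a finite set of pairwise distinct finsets of I ⊕ Fin n. Then there exists an injective map g : Fin n → I such that the map sending a finset s : Finset (I ⊕ Fin n) to its image under Sum.elim id g (a finset of I) is injective on S. -/
/-! Every element occurring in a member of `S` lies in the finite set `T = ⋃ S`, so it suffices to
send the new generators `Fin n` injectively into `I` outside the finitely many old generators
occurring in `T`: then `Sum.elim id g` is injective on `T`, hence `s ↦ s.image (Sum.elim id g)` is
injective on `S`. Such a `g` exists because `I` is infinite. -/

open Function Set

theorem Sum.elim_id_injOn {α β : Type*} {g : β → α} (hg : Injective g) {t : Set (α ⊕ β)}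
    (ht : Disjoint (Sum.inl ⁻¹' t) (range g)) : InjOn (Sum.elim id g) t := by
  rintro (a | b) ha (a' | b') ha' h
  · simpa using h
  · exact (ht.notMem_of_mem_left ha ⟨b', h.symm⟩).elim
  · exact (ht.notMem_of_mem_left ha' ⟨b, h⟩).elim
  · exact congrArg Sum.inr (hg h)

theorem stmt_9 {I : Type*} [Infinite I] [DecidableEq I] (n : ℕ)
    (S : Finset (Finset (I ⊕ Fin n))) :
    ∃ g : Fin n → I, Function.Injective g ∧
      Set.InjOn (fun s : Finset (I ⊕ Fin n) => s.image (Sum.elim id g)) ↑S := by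
  obtain ⟨g, hg⟩ := Fin.Embedding.exists_embedding_disjoint_range_of_add_le_ENat_card
    (s := ((S.biUnion id).toLeft : Set I)) (n := n) (by simp [ENat.card_eq_top_of_infinite])
  refine ⟨g, g.injective, Finset.injOn_image_of_biUnion_injOn (Sum.elim_id_injOn g.injective ?_)⟩
  exact hg.mono_left fun a ha => Finset.mem_toLeft.mpr ha
end

section
/- Let X be a type, i : X, and x, y : Finset X. The solution set of x ∪ {i} = y ∪ {i} is exactly the union of three families: {(t, {i} ∪ t) | t : Finset X} ∪ {({i} ∪ t, t) | t : Finset X} ∪ {(t, t) | t : Finset X}. -/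
namespace Finset

variable {X : Type*} [DecidableEq X]

theorem insert_eq_insert_iff_s15 {i : X} {x y : Finset X} :
    insert i x = insert i y ↔ y = insert i x ∨ x = insert i y ∨ x = y := by
  constructor
  · intro h
    by_cases hx : i ∈ x <;> by_cases hy : i ∈ y
    · rw [insert_eq_of_mem hx, insert_eq_of_mem hy] at h
      exact .inr (.inr h)
    · rw [insert_eq_of_mem hx] at h
      exact .inr (.inl h)
    · rw [insert_eq_of_mem hy] at h
      exact .inl h.symm
    · right; right
      simpa [erase_insert hx, erase_insert hy] using congrArg (erase · i) h
  · rintro (rfl | rfl | rfl) <;> simp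

end Finset

theorem stmt_15 {X : Type*} [DecidableEq X] (i : X) :
    {p : Finset X × Finset X | p.1 ∪ {i} = p.2 ∪ {i}} =
      {p : Finset X × Finset X | ∃ t, p = (t, {i} ∪ t)} ∪
        {p : Finset X × Finset X | ∃ t, p = ({i} ∪ t, t)} ∪
          {p : Finset X × Finset X | ∃ t, p = (t, t)} := by
  ext ⟨x, y⟩
  simp only [Set.mem_ofPred_eq, Set.mem_union, Prod.mk.injEq, exists_eq_left', exists_eq_right',
    Finset.union_singleton, ← Finset.insert_eq, Finset.insert_eq_insert_iff_s15, or_assoc,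
    @eq_comm _ y x]
end
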